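/- Let U be a symmetric positive-definite real 3×3 matrix with eigenvalues λ₁ < λ₂ = 1 < λ₃ and orthonormal eigenvectors û₁, û₂, û₃, and let ê₁, ê₂ be unit vectors such that (û₂, ê₁, ê₂) is an orthonormal basis of ℝ³; set Q₁ := −I + 2 ê₁⊗ê₁, Q₂ := −I + 2 ê₂⊗ê₂, and assume V := Q₁ U Q₁ = Q₂ U Q₂ with V ≠ U. If (û₁ · ê₁) = −(û₃ · ê₁), then U V = V U. -/
import Mathlib


open Matrix

noncomputable section

abbrev V3 : Type := Fin 3 → ℝ
abbrev M3 : Type := Matrix (Fin 3) (Fin 3) ℝ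

/-- Rank-one matrix `a ⊗ n` with entries `aᵢ nⱼ`. -/
def outer (a n : V3) : M3 := Matrix.vecMulVec a n

lemma outer_mulVec (a n x : V3) : (outer a n).mulVec x = (n ⬝ᵥ x) • a := by
  ext i
  simp [outer, Matrix.vecMulVec, Matrix.mulVec, dotProduct, Finset.mul_sum,
    mul_comm, mul_left_comm]

/-- If `U, V` form compound domains with symmetry axes `ê₁, ê₂` such that
`(û₂, ê₁, ê₂)` is an orthonormal basis, and `(û₁·ê₁) = −(û₃·ê₁)`, then the
variants `U` and `V` commute. -/
theorem compound_domains_commute_of_diagonal_axis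
    (U : M3) (hU : U.PosDef)
    (l1 l3 : ℝ) (hl1 : l1 < 1) (hl3 : 1 < l3)
    (u1 u2 u3 : V3)
    (hUu1 : U.mulVec u1 = l1 • u1) (hUu2 : U.mulVec u2 = u2)
    (hUu3 : U.mulVec u3 = l3 • u3)
    (hn1 : u1 ⬝ᵥ u1 = 1) (hn2 : u2 ⬝ᵥ u2 = 1) (hn3 : u3 ⬝ᵥ u3 = 1)
    (ho12 : u1 ⬝ᵥ u2 = 0) (ho13 : u1 ⬝ᵥ u3 = 0) (ho23 : u2 ⬝ᵥ u3 = 0)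
    (e1 e2 : V3) (he1 : e1 ⬝ᵥ e1 = 1) (he2 : e2 ⬝ᵥ e2 = 1)
    (he12 : e1 ⬝ᵥ e2 = 0) (hu2e1 : u2 ⬝ᵥ e1 = 0) (hu2e2 : u2 ⬝ᵥ e2 = 0)
    (Q1 Q2 : M3)
    (hQ1 : Q1 = -1 + (2 : ℝ) • outer e1 e1)
    (hQ2 : Q2 = -1 + (2 : ℝ) • outer e2 e2)
    (V : M3) (hV1 : V = Q1 * U * Q1) (hV2 : V = Q2 * U * Q2) (hVU : V ≠ U)
    (hdiag : u1 ⬝ᵥ e1 = -(u3 ⬝ᵥ e1)) :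
    U * V = V * U := by
  obtain ⟨c, hc⟩ : ∃ c : ℝ, u1 ⬝ᵥ e1 = c := ⟨_, rfl⟩
  have hs : u3 ⬝ᵥ e1 = -c := by rw [← hc, hdiag]; ring
  have ho21 : u2 ⬝ᵥ u1 = 0 := by rw [dotProduct_comm]; exact ho12
  have ho31 : u3 ⬝ᵥ u1 = 0 := by rw [dotProduct_comm]; exact ho13
  have ho32 : u3 ⬝ᵥ u2 = 0 := by rw [dotProduct_comm]; exact ho23
  have h1e : e1 ⬝ᵥ u1 = c := by rw [dotProduct_comm]; exact hc
  have h2e : e1 ⬝ᵥ u2 = 0 := by rw [dotProduct_comm]; exact hu2e1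
  have h3e : e1 ⬝ᵥ u3 = -c := by rw [dotProduct_comm]; exact hs
  have hP : ∀ i, (Matrix.of ![u1, u2, u3] : M3) i = ![u1, u2, u3] i := fun _ => rfl
  let P : M3 := Matrix.of ![u1, u2, u3]
  have hPPt : P * Pᵀ = 1 := by
    ext i j
    have hent : (P * Pᵀ) i j = (![u1, u2, u3] i) ⬝ᵥ (![u1, u2, u3] j) := rfl
    rw [hent]
    fin_cases i <;> fin_cases j <;>
      simp [Matrix.one_apply, hn1, hn2, hn3, ho12, ho13, ho23, ho21, ho31, ho32]
  have hPtP : Pᵀ * P = 1 := mul_eq_one_comm.mp hPPt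
  have hzero : ∀ w : V3, w ⬝ᵥ u1 = 0 → w ⬝ᵥ u2 = 0 → w ⬝ᵥ u3 = 0 → w = 0 := by
    intro w h1 h2 h3
    have hPw : P.mulVec w = 0 := by
      ext i
      have hent : P.mulVec w i = (![u1, u2, u3] i) ⬝ᵥ w := rfl
      rw [hent]
      fin_cases i
      · simpa [dotProduct_comm] using h1
      · simpa [dotProduct_comm] using h2
      · simpa [dotProduct_comm] using h3
    calc w = (1 : M3).mulVec w := by simp
      _ = (Pᵀ * P).mulVec w := by rw [hPtP]
      _ = Pᵀ.mulVec (P.mulVec w) := by rw [Matrix.mulVec_mulVec]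
      _ = 0 := by rw [hPw]; simp
  have hdec : e1 = c • u1 + (-c) • u3 := by
    have h := hzero (e1 - (c • u1 + (-c) • u3)) ?_ ?_ ?_
    · linear_combination (norm := module) h
    · simp [sub_dotProduct, add_dotProduct, smul_dotProduct, h1e, hn1, ho31, hc]
    · simp [sub_dotProduct, add_dotProduct, smul_dotProduct, h2e, ho12, ho32]
    · simp [sub_dotProduct, add_dotProduct, smul_dotProduct, h3e, hn3, ho13]
  have h2c : 2 * (c * c) = 1 := by
    have := he1
    rw [hdec] at this
    simp only [add_dotProduct, dotProduct_add, smul_dotProduct, dotProduct_smul,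
      smul_eq_mul, hn1, hn3, ho13, ho31] at this
    linear_combination this
  have hQ1v : ∀ x : V3, Q1.mulVec x = -x + (2 * (e1 ⬝ᵥ x)) • e1 := by
    intro x
    rw [hQ1, Matrix.add_mulVec, Matrix.neg_mulVec, Matrix.one_mulVec,
      Matrix.smul_mulVec, outer_mulVec, smul_smul]
  have hq1 : Q1.mulVec u1 = -u3 := by
    rw [hQ1v, h1e, hdec]
    ext i
    simp only [Pi.add_apply, Pi.neg_apply, Pi.smul_apply, smul_eq_mul]
    linear_combination (u1 i - u3 i) * h2c
  have hq3 : Q1.mulVec u3 = -u1 := by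
    rw [hQ1v, h3e, hdec]
    ext i
    simp only [Pi.add_apply, Pi.neg_apply, Pi.smul_apply, smul_eq_mul]
    linear_combination (u3 i - u1 i) * h2c
  have hq2 : Q1.mulVec u2 = -u2 := by
    rw [hQ1v, h2e]
    ext i; simp
  have hVmul : ∀ x : V3, V.mulVec x = Q1.mulVec (U.mulVec (Q1.mulVec x)) := by
    intro x
    rw [hV1, Matrix.mulVec_mulVec, Matrix.mulVec_mulVec]
  have hVu1 : V.mulVec u1 = l3 • u1 := by
    rw [hVmul, hq1, Matrix.mulVec_neg, hUu3, Matrix.mulVec_neg, Matrix.mulVec_smul, hq3]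
    ext i; simp
  have hVu2 : V.mulVec u2 = u2 := by
    rw [hVmul, hq2, Matrix.mulVec_neg, hUu2, Matrix.mulVec_neg, hq2]
    ext i; simp
  have hVu3 : V.mulVec u3 = l1 • u3 := by
    rw [hVmul, hq3, Matrix.mulVec_neg, hUu1, Matrix.mulVec_neg, Matrix.mulVec_smul, hq1]
    ext i; simp
  have key1 : (U * V).mulVec u1 = (V * U).mulVec u1 := by
    rw [← Matrix.mulVec_mulVec, ← Matrix.mulVec_mulVec, hVu1, Matrix.mulVec_smul, hUu1,
      Matrix.mulVec_smul, hVu1, smul_comm]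
  have key2 : (U * V).mulVec u2 = (V * U).mulVec u2 := by
    rw [← Matrix.mulVec_mulVec, ← Matrix.mulVec_mulVec, hVu2, hUu2, hVu2]
  have key3 : (U * V).mulVec u3 = (V * U).mulVec u3 := by
    rw [← Matrix.mulVec_mulVec, ← Matrix.mulVec_mulVec, hVu3, Matrix.mulVec_smul, hUu3,
      Matrix.mulVec_smul, hVu3, smul_comm]
  have hAB : (U * V) * Pᵀ = (V * U) * Pᵀ := by
    ext i j
    have hent : ∀ A : M3, (A * Pᵀ) i j = A.mulVec (![u1, u2, u3] j) i := fun A => rfl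
    rw [hent, hent]
    fin_cases j
    · exact congrFun key1 i
    · exact congrFun key2 i
    · exact congrFun key3 i
  have hfin : U * V * (Pᵀ * P) = V * U * (Pᵀ * P) := by
    rw [← mul_assoc, ← mul_assoc, hAB]
  simpa [hPtP] using hfin
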